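/- Let f : ℝ³ → ℝ be such that f(v₁,v₂,v₃) = f(v₁,v₂,−v₃) for all v, and such that f and all moments up to third order of f (i.e. v ↦ p(v) f(v) for any monomial p of degree ≤ 3) are integrable on ℝ³. Define g(v₁) = ∫_{ℝ²} f d(v₂,v₃), h(v₁) = ∫_{ℝ²} ((v₂²+v₃²)/2) f d(v₂,v₃), s₂(v₁) = ∫_{ℝ²} v₂ f d(v₂,v₃), and assume the corresponding one-dimensional integrals below converge. Set ρ = ∫ f dv with ρ ≠ 0, u₁ = (1/ρ)∫ v₁ f dv, u₂ = (1/ρ)∫ v₂ f dv, u = (u₁,u₂,0). Then the heat flux q₁ = (1/2)∫_{ℝ³} |v−u|² (v₁−u₁) f(v) dv satisfies q₁ = ∫_ℝ (v₁−u₁)( (1/2)(v₁−u₁)² g(v₁) + h(v₁) ) dv₁ − u₂ ∫_ℝ (v₁−u₁) s₂(v₁) dv₁ + (u₂²/2) ∫_ℝ (v₁−u₁) g(v₁) dv₁. -/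
import Mathlib


open MeasureTheory Real

/-- For a distribution `f` on ℝ³ that is plane-symmetric in `v₃` and has all moments up
to third order integrable, the heat flux `q₁` is expressed through one-dimensional
integrals of the reduced distributions `g`, `h`, `s₂` (with `u₃ = 0`). -/
theorem heat_flux_reduced
    (f : ℝ × ℝ × ℝ → ℝ)
    (hsym : ∀ v₁ v₂ v₃ : ℝ, f (v₁, v₂, v₃) = f (v₁, v₂, -v₃))
    (hmom : ∀ a b c : ℕ, a + b + c ≤ 3 →
      Integrable (fun v : ℝ × ℝ × ℝ => v.1 ^ a * v.2.1 ^ b * v.2.2 ^ c * f v))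
    (g h s₂ : ℝ → ℝ)
    (hg : ∀ v₁ : ℝ, g v₁ = ∫ w : ℝ × ℝ, f (v₁, w.1, w.2))
    (hh : ∀ v₁ : ℝ, h v₁ = ∫ w : ℝ × ℝ, ((w.1 ^ 2 + w.2 ^ 2) / 2) * f (v₁, w.1, w.2))
    (hs₂ : ∀ v₁ : ℝ, s₂ v₁ = ∫ w : ℝ × ℝ, w.1 * f (v₁, w.1, w.2))
    (ρ u₁ u₂ : ℝ) (hρdef : ρ = ∫ v : ℝ × ℝ × ℝ, f v) (hρ : ρ ≠ 0)
    (hu₁ : u₁ = (1 / ρ) * ∫ v : ℝ × ℝ × ℝ, v.1 * f v)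
    (hu₂ : u₂ = (1 / ρ) * ∫ v : ℝ × ℝ × ℝ, v.2.1 * f v)
    (hint1 : Integrable (fun v₁ : ℝ => (v₁ - u₁) * ((1 / 2) * (v₁ - u₁) ^ 2 * g v₁ + h v₁)))
    (hint2 : Integrable (fun v₁ : ℝ => (v₁ - u₁) * s₂ v₁))
    (hint3 : Integrable (fun v₁ : ℝ => (v₁ - u₁) * g v₁)) :
    (1 / 2) * (∫ v : ℝ × ℝ × ℝ,
        ((v.1 - u₁) ^ 2 + (v.2.1 - u₂) ^ 2 + (v.2.2 - 0) ^ 2) * (v.1 - u₁) * f v) =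
      (∫ v₁ : ℝ, (v₁ - u₁) * ((1 / 2) * (v₁ - u₁) ^ 2 * g v₁ + h v₁)) -
        u₂ * (∫ v₁ : ℝ, (v₁ - u₁) * s₂ v₁) +
        (u₂ ^ 2 / 2) * ∫ v₁ : ℝ, (v₁ - u₁) * g v₁ := by
  -- integrability of f itself
  have hf : Integrable f := by
    have h0 := hmom 0 0 0 (by norm_num)
    have e : (fun v : ℝ × ℝ × ℝ => v.1 ^ 0 * v.2.1 ^ 0 * v.2.2 ^ 0 * f v) = f := by
      funext v; ring
    rwa [e] at h0
  -- integrability of the three 3D integrands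
  have hI3 : Integrable (fun v : ℝ × ℝ × ℝ => (v.1 - u₁) * f v) := by
    have h1 := (hmom 1 0 0 (by norm_num)).add (hf.const_mul (-u₁))
    have e : (fun v : ℝ × ℝ × ℝ => v.1 ^ 1 * v.2.1 ^ 0 * v.2.2 ^ 0 * f v + -u₁ * f v)
        = fun v : ℝ × ℝ × ℝ => (v.1 - u₁) * f v := by funext v; ring
    exact h1.congr (Filter.Eventually.of_forall fun v => by simp only [Pi.add_apply]; ring)
  have hI2 : Integrable (fun v : ℝ × ℝ × ℝ => (v.1 - u₁) * (v.2.1 * f v)) := by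
    have h1 := (hmom 1 1 0 (by norm_num)).add ((hmom 0 1 0 (by norm_num)).const_mul (-u₁))
    have e : (fun v : ℝ × ℝ × ℝ => v.1 ^ 1 * v.2.1 ^ 1 * v.2.2 ^ 0 * f v
        + -u₁ * (v.1 ^ 0 * v.2.1 ^ 1 * v.2.2 ^ 0 * f v))
        = fun v : ℝ × ℝ × ℝ => (v.1 - u₁) * (v.2.1 * f v) := by funext v; ring
    exact h1.congr (Filter.Eventually.of_forall fun v => by simp only [Pi.add_apply]; ring)
  have hw : Integrable (fun v : ℝ × ℝ × ℝ => ((v.2.1 ^ 2 + v.2.2 ^ 2) / 2) * f v) := by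
    have h1 := ((hmom 0 2 0 (by norm_num)).const_mul (1/2)).add
      ((hmom 0 0 2 (by norm_num)).const_mul (1/2))
    have e : (fun v : ℝ × ℝ × ℝ => (1/2) * (v.1 ^ 0 * v.2.1 ^ 2 * v.2.2 ^ 0 * f v)
        + (1/2) * (v.1 ^ 0 * v.2.1 ^ 0 * v.2.2 ^ 2 * f v))
        = fun v : ℝ × ℝ × ℝ => ((v.2.1 ^ 2 + v.2.2 ^ 2) / 2) * f v := by funext v; ring
    exact h1.congr (Filter.Eventually.of_forall fun v => by simp only [Pi.add_apply]; ring)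
  have hI1 : Integrable (fun v : ℝ × ℝ × ℝ =>
      (v.1 - u₁) * ((1 / 2) * (v.1 - u₁) ^ 2 + (v.2.1 ^ 2 + v.2.2 ^ 2) / 2) * f v) := by
    have h1 := (((((((((hmom 3 0 0 (by norm_num)).const_mul (1/2)).add
      ((hmom 2 0 0 (by norm_num)).const_mul (-(3*u₁)/2))).add
      ((hmom 1 0 0 (by norm_num)).const_mul ((3*u₁^2)/2))).add
      (hf.const_mul (-(u₁^3)/2))).add
      ((hmom 1 2 0 (by norm_num)).const_mul (1/2))).add
      ((hmom 1 0 2 (by norm_num)).const_mul (1/2))).add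
      ((hmom 0 2 0 (by norm_num)).const_mul (-u₁/2))).add
      ((hmom 0 0 2 (by norm_num)).const_mul (-u₁/2)))
    have e : (fun v : ℝ × ℝ × ℝ =>
        (1/2) * (v.1 ^ 3 * v.2.1 ^ 0 * v.2.2 ^ 0 * f v)
        + -(3*u₁)/2 * (v.1 ^ 2 * v.2.1 ^ 0 * v.2.2 ^ 0 * f v)
        + (3*u₁^2)/2 * (v.1 ^ 1 * v.2.1 ^ 0 * v.2.2 ^ 0 * f v)
        + -(u₁^3)/2 * f v
        + (1/2) * (v.1 ^ 1 * v.2.1 ^ 2 * v.2.2 ^ 0 * f v)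
        + (1/2) * (v.1 ^ 1 * v.2.1 ^ 0 * v.2.2 ^ 2 * f v)
        + -u₁/2 * (v.1 ^ 0 * v.2.1 ^ 2 * v.2.2 ^ 0 * f v)
        + -u₁/2 * (v.1 ^ 0 * v.2.1 ^ 0 * v.2.2 ^ 2 * f v))
        = fun v : ℝ × ℝ × ℝ =>
          (v.1 - u₁) * ((1 / 2) * (v.1 - u₁) ^ 2 + (v.2.1 ^ 2 + v.2.2 ^ 2) / 2) * f v := by
      funext v; ring
    exact h1.congr (Filter.Eventually.of_forall fun v => by simp only [Pi.add_apply]; ring)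
  -- Fubini for the three 1D integrals
  have e3 : (∫ v₁ : ℝ, (v₁ - u₁) * g v₁)
      = ∫ v : ℝ × ℝ × ℝ, (v.1 - u₁) * f v := by
    simp_rw [hg, ← integral_const_mul]
    exact integral_integral hI3
  have e2 : (∫ v₁ : ℝ, (v₁ - u₁) * s₂ v₁)
      = ∫ v : ℝ × ℝ × ℝ, (v.1 - u₁) * (v.2.1 * f v) := by
    simp_rw [hs₂, ← integral_const_mul]
    exact integral_integral hI2
  have e1 : (∫ v₁ : ℝ, (v₁ - u₁) * ((1 / 2) * (v₁ - u₁) ^ 2 * g v₁ + h v₁))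
      = ∫ v : ℝ × ℝ × ℝ,
          (v.1 - u₁) * ((1 / 2) * (v.1 - u₁) ^ 2 + (v.2.1 ^ 2 + v.2.2 ^ 2) / 2) * f v := by
    have key := integral_integral (μ := (volume : Measure ℝ)) (ν := (volume : Measure (ℝ × ℝ)))
      (f := fun v₁ (w : ℝ × ℝ) =>
        (v₁ - u₁) * ((1 / 2) * (v₁ - u₁) ^ 2 + (w.1 ^ 2 + w.2 ^ 2) / 2) * f (v₁, w.1, w.2)) hI1
    refine Eq.trans ?_ key
    refine integral_congr_ae ?_
    filter_upwards [hf.prod_right_ae, hw.prod_right_ae] with v₁ h1 h2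
    have e : (fun w : ℝ × ℝ =>
        (v₁ - u₁) * ((1 / 2) * (v₁ - u₁) ^ 2 + (w.1 ^ 2 + w.2 ^ 2) / 2) * f (v₁, w.1, w.2))
        = fun w : ℝ × ℝ => ((v₁ - u₁) * ((1 / 2) * (v₁ - u₁) ^ 2)) * f (v₁, w.1, w.2)
          + (v₁ - u₁) * (((w.1 ^ 2 + w.2 ^ 2) / 2) * f (v₁, w.1, w.2)) := by
      funext w; ring
    calc (v₁ - u₁) * ((1 / 2) * (v₁ - u₁) ^ 2 * g v₁ + h v₁)
        = ((v₁ - u₁) * ((1 / 2) * (v₁ - u₁) ^ 2)) * (∫ w : ℝ × ℝ, f (v₁, w.1, w.2))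
          + (v₁ - u₁) * ∫ w : ℝ × ℝ, ((w.1 ^ 2 + w.2 ^ 2) / 2) * f (v₁, w.1, w.2) := by
          rw [hg, hh]; ring
      _ = ∫ w : ℝ × ℝ,
            (v₁ - u₁) * ((1 / 2) * (v₁ - u₁) ^ 2 + (w.1 ^ 2 + w.2 ^ 2) / 2)
              * f (v₁, w.1, w.2) := by
          rw [e, integral_add (h1.const_mul _) (h2.const_mul _),
            integral_const_mul, integral_const_mul]
  have hsub : Integrable (fun v : ℝ × ℝ × ℝ =>
      (v.1 - u₁) * ((1 / 2) * (v.1 - u₁) ^ 2 + (v.2.1 ^ 2 + v.2.2 ^ 2) / 2) * f v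
        - u₂ * ((v.1 - u₁) * (v.2.1 * f v))) := hI1.sub (hI2.const_mul u₂)
  rw [e1, e2, e3, ← integral_const_mul, ← integral_const_mul, ← integral_const_mul,
    ← integral_sub hI1 (hI2.const_mul u₂),
    ← integral_add hsub (hI3.const_mul (u₂ ^ 2 / 2))]
  exact integral_congr_ae (Filter.Eventually.of_forall fun v => by ring)
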